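/- arXiv:2602.19189 — 5 statements merged into one kernel-verified Lean document; each statement's English description precedes it below -/
import Mathlib

section
/- If S is a clique minimal separator of a connected graph G, A is a full component of S (i.e., a connected component of G − S with N_G(A) = S), and B = V \ (A ∪ S), then both A ∪ S and B ∪ S are convex vertex sets of G. -/
open SimpleGraph

variable {V : Type*}

/-- `S` separates `u` from `v` in `G`: `u, v ∉ S` and every walk from `u` to `v` meets `S`. -/
def SepSet (G : SimpleGraph V) (u v : V) (S : Set V) : Prop :=
  u ∉ S ∧ v ∉ S ∧ ∀ p : G.Walk u v, ∃ x ∈ p.support, x ∈ S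

/-- `S` is a minimal `uv`-separator of `G`. -/
def MinSepSet (G : SimpleGraph V) (u v : V) (S : Set V) : Prop :=
  SepSet G u v S ∧ ∀ S' ⊂ S, ¬ SepSet G u v S'

/-- `S` is a clique minimal separator of `G`. -/
def CliqueMinSep (G : SimpleGraph V) (S : Set V) : Prop :=
  G.IsClique S ∧ ∃ u v, MinSepSet G u v S

/-- `S` is a clique separator of `G` (a complete set whose removal disconnects `G`). -/
def CliqueSep (G : SimpleGraph V) (S : Set V) : Prop :=
  G.IsClique S ∧ ∃ u v, SepSet G u v S

/-- The (open) neighborhood of a vertex set `A` in `G`. -/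
def Nbhd (G : SimpleGraph V) (A : Set V) : Set V :=
  {v | v ∉ A ∧ ∃ a ∈ A, G.Adj v a}

/-- `X` is a connected component of the induced subgraph of `G` on `A`:
a maximal subset of `A` inducing a connected subgraph. -/
def CompOf (G : SimpleGraph V) (A X : Set V) : Prop :=
  X.Nonempty ∧ X ⊆ A ∧ (G.induce X).Connected ∧
    ∀ Y, X ⊆ Y → Y ⊆ A → (G.induce Y).Connected → Y = X

/-- `A` is convex in `G`: no two distinct non-adjacent vertices of `A` are joined
by a path whose internal vertices all avoid `A`. -/
def ConvexSet (G : SimpleGraph V) (A : Set V) : Prop :=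
  ∀ u ∈ A, ∀ v ∈ A, u ≠ v → ¬ G.Adj u v →
    ∀ p : G.Walk u v, p.IsPath → ¬ (∀ x ∈ p.support, x ≠ u → x ≠ v → x ∉ A)

/-- `H` induces an atom of `G`: a maximal connected induced subgraph
containing no clique minimal separator. -/
def GraphAtom (G : SimpleGraph V) (H : Set V) : Prop :=
  (G.induce H).Connected ∧ (¬ ∃ S : Set H, CliqueMinSep (G.induce H) S) ∧
  ∀ H', H ⊆ H' → (G.induce H').Connected →
    (¬ ∃ S : Set H', CliqueMinSep (G.induce H') S) → H' = H

/-- `α` is a maximum cardinality search ordering of `G` (smaller labels are chosen later):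
when the vertex `u` receives its label, the already-labeled vertices are those with larger
labels, and `u` maximizes the number of labeled neighbors among all yet-unlabeled vertices. -/
def IsMCS {n : ℕ} (G : SimpleGraph V) (α : V ≃ Fin n) : Prop :=
  ∀ u w : V, α w ≤ α u →
    {x | G.Adj w x ∧ α u < α x}.ncard ≤ {x | G.Adj u x ∧ α u < α x}.ncard

/-!
A path between two non-adjacent vertices of `C ∪ S` cannot step from an endpoint in `C` straight
out of `C ∪ S` when every neighbour of `C` outside `C` lies in `S`, while two endpoints in the clique `S` would be
adjacent. A component `A` of `G - S` has all its outside neighbours in `S` by maximality, and then so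
does the rest `B` of `G - S`, since an edge between `A` and `B` would put a vertex of `B` into `S`.
-/

namespace SimpleGraph

variable {G : SimpleGraph V} {S A C : Set V}

theorem CompOf.nbhd_subset (hA : CompOf G Sᶜ A) : Nbhd G A ⊆ S := by
  obtain ⟨-, hAS, hconn, hmax⟩ := hA
  rintro y ⟨hyA, a, ha, hya⟩
  by_contra hyS
  have hext : (G.induce (A ∪ {y})).Connected :=
    G.connected_induce_union hconn.preconnected .of_subsingleton ha rfl hya.symm
  have hsub : A ∪ {y} ⊆ Sᶜ := Set.union_subset hAS (Set.singleton_subset_iff.2 hyS)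
  exact hyA (hmax _ Set.subset_union_left hsub hext ▸ Set.mem_union_right A rfl)

theorem nbhd_compl_union_subset (hA : Nbhd G A ⊆ S) : Nbhd G (A ∪ S)ᶜ ⊆ S := by
  rintro v ⟨hv, b, hb, hvb⟩
  rcases Set.notMem_compl_iff.1 hv with hvA | hvS
  · exact absurd (hA ⟨fun hbA => hb (.inl hbA), v, hvA, hvb.symm⟩) fun hbS => hb (.inr hbS)
  · exact hvS

theorem convexSet_union_of_nbhd_subset (hS : G.IsClique S) (hC : Nbhd G C ⊆ S) :
    ConvexSet G (C ∪ S) := by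
  intro u hu v hv huv hnadj p _ hinner
  have hp : ¬ p.Nil := Walk.not_nil_of_ne huv
  have mem_of_adj : ∀ x ∈ C, ∀ w, G.Adj x w → w ∈ C ∪ S := fun x hx w hxw =>
    or_iff_not_imp_left.2 fun hw => hC ⟨hw, x, hx, hxw.symm⟩
  rcases hu with hu | hu
  · have hw := p.adj_snd hp
    exact hinner _ (p.getVert_mem_support 1) hw.ne' (fun h => hnadj (h ▸ hw))
      (mem_of_adj u hu _ hw)
  rcases hv with hv | hv
  · have hw := p.adj_penultimate hp
    exact hinner _ (p.getVert_mem_support _) (fun h => hnadj (h ▸ hw)) hw.ne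
      (mem_of_adj v hv _ hw.symm)
  exact hnadj (hS hu hv huv)

end SimpleGraph

theorem clique_min_sep_decomposition_convex_general
    (G : SimpleGraph V) (S A B : Set V)
    (hS : CliqueMinSep G S) (hA : CompOf G Sᶜ A)
    (hB : B = (A ∪ S)ᶜ) :
    ConvexSet G (A ∪ S) ∧ ConvexSet G (B ∪ S) := by
  subst hB
  have hAS : Nbhd G A ⊆ S := hA.nbhd_subset
  exact ⟨convexSet_union_of_nbhd_subset hS.1 hAS,
    convexSet_union_of_nbhd_subset hS.1 (nbhd_compl_union_subset hAS)⟩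

theorem clique_min_sep_decomposition_convex [Fintype V]
    (G : SimpleGraph V) (hG : G.Connected) (S A B : Set V)
    (hS : CliqueMinSep G S) (hA : CompOf G Sᶜ A) (hfull : Nbhd G A = S)
    (hB : B = (A ∪ S)ᶜ) :
    ConvexSet G (A ∪ S) ∧ ConvexSet G (B ∪ S) :=
  clique_min_sep_decomposition_convex_general G S A B hS hA hB
end

section
/- Let G be a connected undirected graph with a maximum cardinality search (MCS) ordering α, and let v be the vertex with the smallest label under α. Then the convex hull H of the closed neighborhood N_G[v] induces an atom of G; i.e., G_H contains no clique minimal separator, and H is maximal among connected vertex sets with this property. -/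
/-
Let `v` be the last vertex of the search and `H` the convex hull of `N[v]`.

Convexity lets every walk between two vertices of `H` be rerouted inside `H` without meeting
any new vertex, so `G[H]` is connected, and a clique `S` separating two vertices of `H` in
`G[H]` separates them in `G`. Now `S` together with the components of `G - S` that meet `N[v]`
is convex because `S` is a clique, so it contains `H`: every vertex of `H \ S` reaches
`N[v] \ S` in `G - S`. It remains to see that `N[v] \ S` is connected in `G - S`. This is clear
when `v ∉ S`. When `v ∈ S`, follow the search and call a vertex outside `S` heavy if it is a
labeled neighbour of `v`, or is unlabeled and has more labeled neighbours than `S - v` has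
labeled vertices. The heavy vertices stay pairwise connected in `G - S`: a new label in `S`
only makes fewer vertices heavy, while a new label `u ∉ S` is itself heavy as soon as any
vertex is (by the maximality of the choice of `u`, compared with `v` or with that vertex),
and every newly heavy vertex is `u` or a neighbour of `u`. At the end of the search all
neighbours of `v` outside `S` are heavy.

For maximality, if `H ⊊ H'`, pick `z ∈ H' \ H`; by convexity the neighbours in `H` of the
component of `z` in `G[H' \ H]` form a clique, and it separates `z` from `v` in `G[H']`.
-/

open SimpleGraph

variable {V : Type*}

namespace SimpleGraph

variable {G : SimpleGraph V}

def ReachWithin (G : SimpleGraph V) (A : Set V) (x y : V) : Prop :=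
  ∃ p : G.Walk x y, ∀ z ∈ p.support, z ∈ A

namespace ReachWithin

variable {A B : Set V} {x y z : V}

theorem refl (hx : x ∈ A) : G.ReachWithin A x x :=
  ⟨.nil, by simpa using hx⟩

theorem symm (h : G.ReachWithin A x y) : G.ReachWithin A y x :=
  let ⟨p, hp⟩ := h
  ⟨p.reverse, by simpa using hp⟩

theorem trans (hxy : G.ReachWithin A x y) (hyz : G.ReachWithin A y z) : G.ReachWithin A x z :=
  let ⟨p, hp⟩ := hxy
  let ⟨q, hq⟩ := hyz
  ⟨p.append q, fun w hw => ((Walk.mem_support_append_iff p q).1 hw).elim (hp w) (hq w)⟩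

theorem of_adj (h : G.Adj x y) (hx : x ∈ A) (hy : y ∈ A) : G.ReachWithin A x y :=
  ⟨h.toWalk, by simp [hx, hy]⟩

theorem mono (h : G.ReachWithin A x y) (hAB : A ⊆ B) : G.ReachWithin B x y :=
  let ⟨p, hp⟩ := h
  ⟨p, fun w hw => hAB (hp w hw)⟩

theorem mem_right (h : G.ReachWithin A x y) : y ∈ A :=
  let ⟨p, hp⟩ := h
  hp y p.end_mem_support

end ReachWithin

theorem induce_connected_of_reachWithin {A : Set V} (hA : A.Nonempty)
    (h : ∀ x ∈ A, ∀ y ∈ A, G.ReachWithin A x y) : (G.induce A).Connected := by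
  have : Nonempty A := hA.to_subtype
  refine Connected.mk fun a b => ?_
  obtain ⟨p, hp⟩ := h a a.2 b b.2
  exact ⟨p.induce A hp⟩

theorem exists_induce_walk_iff {A B : Set V} {a b : A} :
    (∃ p : (G.induce A).Walk a b, ∀ x ∈ p.support, (x : V) ∈ B) ↔
      G.ReachWithin (A ∩ B) a b := by
  constructor
  · rintro ⟨p, hp⟩
    have hq : ∀ x ∈ (p.map (Embedding.induce A).toHom).support, x ∈ A ∩ B := by
      rw [Walk.support_map, List.forall_mem_map]
      exact fun y hy => ⟨y.2, hp y hy⟩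
    exact ⟨_, hq⟩
  · rintro ⟨p, hp⟩
    refine ⟨p.induce A fun x hx => (hp x hx).1, fun x hx => ?_⟩
    simp only [Walk.support_induce, List.mem_attachWith] at hx
    exact (hp x hx).2

theorem sepSet_induce_preimage_iff {A B : Set V} {a b : A} :
    SepSet (G.induce A) a b (Subtype.val ⁻¹' B) ↔
      (a : V) ∉ B ∧ (b : V) ∉ B ∧ ¬ G.ReachWithin (A \ B) a b := by
  simp only [SepSet, Set.mem_preimage, Set.sdiff_eq, ← exists_induce_walk_iff, not_exists,
    not_forall, Set.mem_compl_iff, not_not, exists_prop]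

theorem isClique_induce_preimage {A B : Set V} (hB : G.IsClique B) :
    (G.induce A).IsClique (Subtype.val ⁻¹' B) :=
  fun _ hx _ hy hxy => hB hx hy (Subtype.val_injective.ne hxy)

theorem isClique_image_of_isClique_induce {A : Set V} {S : Set A} (hS : (G.induce A).IsClique S) :
    G.IsClique (Subtype.val '' S) := by
  rintro _ ⟨x, hx, rfl⟩ _ ⟨y, hy, rfl⟩ hxy
  exact hS hx hy (ne_of_apply_ne _ hxy)

theorem Walk.exists_boundary_reachWithin_diff {A H : Set V} {z y : V} (p : G.Walk z y)
    (hp : ∀ x ∈ p.support, x ∈ A) (hz : z ∉ H) (hy : y ∈ H) :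
    ∃ d ∈ p.support, d ∈ H ∧ ∃ c, G.ReachWithin (A \ H) z c ∧ G.Adj c d := by
  have hzA : z ∈ A := hp z p.start_mem_support
  obtain ⟨e, he, hfst, hsnd⟩ := p.exists_boundary_dart {c | G.ReachWithin (A \ H) z c}
    (.refl ⟨hzA, hz⟩) fun h => h.mem_right.2 hy
  have hsnd_mem := p.dart_snd_mem_support_of_mem_darts he
  refine ⟨e.snd, hsnd_mem, ?_, e.fst, hfst, e.adj⟩
  by_contra heH
  exact hsnd (ReachWithin.trans hfst (.of_adj e.adj hfst.mem_right ⟨hp _ hsnd_mem, heH⟩))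

end SimpleGraph

section

variable {G : SimpleGraph V}

theorem exists_minSepSet_subset [Finite V] {a b : V} {S : Set V} (h : SepSet G a b S) :
    ∃ T ⊆ S, MinSepSet G a b T := by
  obtain ⟨T, hTS, hT⟩ := exists_minimal_le_of_wellFoundedLT (SepSet G a b) S h
  exact ⟨T, hTS, hT.prop, fun _ hlt => hT.not_prop_of_lt hlt⟩

namespace ConvexSet

variable {H : Set V}

theorem reachWithin_inter_of_isPath (hH : ConvexSet G H) {A : Set V} {x y : V}
    (p : G.Walk x y) (hp : p.IsPath) (hx : x ∈ H) (hy : y ∈ H)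
    (hA : ∀ z ∈ p.support, z ∈ A) : G.ReachWithin (H ∩ A) x y := by
  classical
  by_cases hxy : x = y
  · subst hxy
    exact .refl ⟨hx, hA x p.start_mem_support⟩
  by_cases hadj : G.Adj x y
  · exact .of_adj hadj ⟨hx, hA x p.start_mem_support⟩ ⟨hy, hA y p.end_mem_support⟩
  obtain ⟨z, hz, hzx, hzy, hzH⟩ : ∃ z ∈ p.support, z ≠ x ∧ z ≠ y ∧ z ∈ H := by
    simpa using hH x hx y hy hxy hadj p hp
  have := Walk.length_takeUntil_lt_length hz hzy
  have := Walk.length_dropUntil_lt_length hz hzx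
  exact (hH.reachWithin_inter_of_isPath _ (hp.takeUntil hz) hx hzH
      fun w hw => hA w (p.support_takeUntil_subset_support hz hw)).trans
    (hH.reachWithin_inter_of_isPath _ (hp.dropUntil hz) hzH hy
      fun w hw => hA w (p.support_dropUntil_subset_support hz hw))
termination_by p.length

theorem reachWithin_inter (hH : ConvexSet G H) {A : Set V} {x y : V} (hx : x ∈ H) (hy : y ∈ H)
    (h : G.ReachWithin A x y) : G.ReachWithin (H ∩ A) x y := by
  classical
  obtain ⟨p, hp⟩ := h
  exact hH.reachWithin_inter_of_isPath p.bypass p.bypass_isPath hx hy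
    fun z hz => hp z (p.support_bypass_subset_support hz)

theorem adj_of_reachWithin_compl (hH : ConvexSet G H) {a b c d : V} (ha : a ∈ H) (hb : b ∈ H)
    (hab : a ≠ b) (hac : G.Adj a c) (hbd : G.Adj b d) (hcd : G.ReachWithin Hᶜ c d) :
    G.Adj a b := by
  classical
  by_contra hnadj
  obtain ⟨p, hp⟩ := hcd
  let q : G.Walk a b := (p.concat hbd.symm).cons hac
  refine hH a ha b hb hab hnadj q.bypass q.bypass_isPath fun x hx hxa hxb => ?_
  have hx' := q.support_bypass_subset_support hx
  simp only [q, Walk.support_cons, Walk.support_concat, List.mem_cons,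
    List.mem_append, List.not_mem_nil, or_false] at hx'
  obtain rfl | hx' | rfl := hx'
  exacts [absurd rfl hxa, hp x hx', absurd rfl hxb]

end ConvexSet

theorem convexSet_union_reachWithin_compl {S : Set V} (hS : G.IsClique S) (R : Set V) :
    ConvexSet G (S ∪ {x | ∃ a ∈ R, G.ReachWithin Sᶜ x a}) := by
  set K := S ∪ {x | ∃ a ∈ R, G.ReachWithin Sᶜ x a}
  have key : ∀ u w, w ∉ S → w ∈ K → u ≠ w → ¬ G.Adj u w → ∀ p : G.Walk u w, p.IsPath →
      ¬ ∀ x ∈ p.support, x ≠ u → x ≠ w → x ∉ K := by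
    intro u w hwS hwK hne hnadj p hp hall
    obtain ⟨a, ha, hwa⟩ := hwK.resolve_left hwS
    cases p with
    | nil => exact hne rfl
    | @cons _ c _ huc q =>
      obtain ⟨-, huq⟩ := (Walk.cons_isPath_iff huc q).1 hp
      have hcw : c ≠ w := by
        rintro rfl
        exact hnadj huc
      have hcu : c ≠ u := fun h => huq (h ▸ q.start_mem_support)
      have hqS : ∀ x ∈ q.support, x ∈ Sᶜ := fun x hx hxS => by
        by_cases hxw : x = w
        · exact hwS (hxw ▸ hxS)
        · exact hall x (by simp [hx]) (fun h => huq (h ▸ hx)) hxw (.inl hxS)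
      exact hall c (by simp) hcu hcw
        (.inr ⟨a, ha, ReachWithin.trans ⟨q, hqS⟩ hwa⟩)
  intro u hu w hw hne hnadj p hp hall
  by_cases hwS : w ∈ S
  · by_cases huS : u ∈ S
    · exact hnadj (hS huS hwS hne)
    · exact key w u huS hu hne.symm (fun h => hnadj h.symm) p.reverse hp.reverse
        fun x hx hxw hxu => hall x (by simpa using hx) hxu hxw
  · exact key u w hwS hw hne hnadj p hp hall

/-- `L` plays the role of the set of vertices labeled so far by the search. -/
def Heavy (G : SimpleGraph V) (S : Set V) (v : V) (L : Set V) (x : V) : Prop :=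
  x ∉ S ∧ (x ∈ G.neighborSet v ∩ L ∨ x ∉ L ∧ (S \ {v} ∩ L).ncard < (G.neighborSet x ∩ L).ncard)

namespace Heavy

variable {S L : Set V} {u v x : V}

theorem not_empty (hx : Heavy G S v ∅ x) : False := by
  obtain ⟨-, ⟨-, h⟩ | ⟨-, h⟩⟩ := hx
  · exact h
  · simp at h

theorem reachWithin_or_of_insert (huS : u ∉ S) (hx : Heavy G S v (insert u L) x) :
    G.ReachWithin Sᶜ x u ∨ Heavy G S v L x := by
  obtain ⟨hxS, ⟨hxv, rfl | hxL⟩ | ⟨hxL, hlt⟩⟩ := hx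
  · exact .inl (.refl hxS)
  · exact .inr ⟨hxS, .inl ⟨hxv, hxL⟩⟩
  · by_cases hxu : G.Adj x u
    · exact .inl (.of_adj hxu hxS huS)
    · rw [Set.inter_insert_of_notMem fun h => huS h.1,
        Set.inter_insert_of_notMem (show u ∉ G.neighborSet x from hxu)] at hlt
      exact .inr ⟨hxS, .inr ⟨fun h => hxL (.inr h), hlt⟩⟩

variable [Finite V]

theorem of_insert_of_mem (huS : u ∈ S) (huv : u ≠ v) (huL : u ∉ L)
    (hx : Heavy G S v (insert u L) x) : Heavy G S v L x := by
  obtain ⟨hxS, ⟨hxv, hxL⟩ | ⟨hxL, hlt⟩⟩ := hx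
  · exact ⟨hxS, .inl ⟨hxv, hxL.resolve_left fun h => hxS (h ▸ huS)⟩⟩
  · have hSv : (S \ {v} ∩ insert u L).ncard = (S \ {v} ∩ L).ncard + 1 := by
      rw [Set.inter_insert_of_mem (show u ∈ S \ {v} from ⟨huS, huv⟩),
        Set.ncard_insert_of_notMem fun h => huL h.2]
    have hsub : G.neighborSet x ∩ insert u L ⊆ insert u (G.neighborSet x ∩ L) :=
      fun w ⟨hw, hwL⟩ => hwL.imp id fun h => ⟨hw, h⟩
    have hN := (Set.ncard_le_ncard hsub).trans (Set.ncard_insert_le u _)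
    exact ⟨hxS, .inr ⟨fun h => hxL (.inr h), by omega⟩⟩

theorem of_ncard_le (hS : G.IsClique S) (hvS : v ∈ S) (hvL : v ∉ L) (huS : u ∉ S) (huL : u ∉ L)
    (hmax : ∀ w ∉ L, (G.neighborSet w ∩ L).ncard ≤ (G.neighborSet u ∩ L).ncard)
    (hx : Heavy G S v L x) : Heavy G S v L u := by
  refine ⟨huS, .inr ⟨huL, ?_⟩⟩
  obtain ⟨hxS, ⟨hxv, hxL⟩ | ⟨hxL, hlt⟩⟩ := hx
  · have hsub : insert x (S \ {v} ∩ L) ⊆ G.neighborSet v ∩ L := by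
      rintro w (rfl | ⟨⟨hwS, hwv⟩, hwL⟩)
      · exact ⟨hxv, hxL⟩
      · exact ⟨hS hvS hwS fun h => hwv h.symm, hwL⟩
    have hcard := Set.ncard_le_ncard hsub
    rw [Set.ncard_insert_of_notMem fun h => hxS h.1.1] at hcard
    have := hmax v hvL
    omega
  · exact hlt.trans_le (hmax x hxL)

end Heavy

theorem reachWithin_compl_of_heavy_insert [Finite V] {S L : Set V} {u v : V}
    (hS : G.IsClique S) (hvS : v ∈ S) (hvL : v ∉ L) (huv : u ≠ v) (huL : u ∉ L)
    (hmax : ∀ w ∉ L, (G.neighborSet w ∩ L).ncard ≤ (G.neighborSet u ∩ L).ncard)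
    (ih : ∀ x y, Heavy G S v L x → Heavy G S v L y → G.ReachWithin Sᶜ x y) {x y : V}
    (hx : Heavy G S v (insert u L) x) (hy : Heavy G S v (insert u L) y) :
    G.ReachWithin Sᶜ x y := by
  by_cases huS : u ∈ S
  · exact ih x y (hx.of_insert_of_mem huS huv huL) (hy.of_insert_of_mem huS huv huL)
  have hu : ∀ w, Heavy G S v (insert u L) w → G.ReachWithin Sᶜ w u := fun w hw =>
    (hw.reachWithin_or_of_insert huS).elim id
      fun hw => ih w u hw (hw.of_ncard_le hS hvS hvL huS huL hmax)
  exact (hu x hx).trans (hu y hy).symm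

def labeledFrom {n : ℕ} (α : V ≃ Fin n) (k : ℕ) : Set V :=
  {x | k ≤ (α x : ℕ)}

theorem labeledFrom_eq_empty {n : ℕ} (α : V ≃ Fin n) : labeledFrom α n = ∅ :=
  Set.eq_empty_of_forall_notMem fun x hx => (α x).isLt.not_ge hx

theorem labeledFrom_eq_insert {n : ℕ} (α : V ≃ Fin n) (k : Fin n) :
    labeledFrom α k = insert (α.symm k) (labeledFrom α (k + 1)) := by
  ext x
  simp only [labeledFrom, Set.mem_ofPred_eq, Set.mem_insert_iff, Equiv.eq_symm_apply]
  constructor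
  · intro h
    rcases h.eq_or_lt with h | h
    · exact .inl (Fin.ext h.symm)
    · exact .inr h
  · rintro (rfl | h)
    exacts [le_rfl, by omega]

theorem IsMCS.ncard_le {n : ℕ} {α : V ≃ Fin n} (hα : IsMCS G α) (k : Fin n) {w : V}
    (hw : w ∉ labeledFrom α (k + 1)) :
    (G.neighborSet w ∩ labeledFrom α (k + 1)).ncard ≤
      (G.neighborSet (α.symm k) ∩ labeledFrom α (k + 1)).ncard := by
  have hset : ∀ x, {y | G.Adj x y ∧ α (α.symm k) < α y} =
      G.neighborSet x ∩ labeledFrom α (k + 1) := fun x => by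
    ext y
    simp only [Equiv.apply_symm_apply, Fin.lt_def, labeledFrom]
    exact and_congr_right fun _ => Nat.succ_le_iff.symm
  have hwk : α w ≤ α (α.symm k) := by
    rw [Equiv.apply_symm_apply, Fin.le_def]
    exact Nat.le_of_lt_succ (not_le.1 hw)
  simpa only [hset] using hα (α.symm k) w hwk

theorem IsMCS.reachWithin_compl_of_adj {n : ℕ} {α : V ≃ Fin n} (hα : IsMCS G α) {v : V}
    (hv : ∀ w, α v ≤ α w) {S : Set V} (hS : G.IsClique S) (hvS : v ∈ S) {a b : V}
    (ha : G.Adj v a) (hb : G.Adj v b) (haS : a ∉ S) (hbS : b ∉ S) : G.ReachWithin Sᶜ a b := by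
  have : Finite V := .of_equiv _ α.symm
  have hheavy : ∀ x, G.Adj v x → x ∉ S → Heavy G S v (labeledFrom α (α v + 1)) x :=
    fun x hx hxS => ⟨hxS, .inl ⟨hx, Nat.succ_le_of_lt <|
      (hv x).lt_of_ne fun h => G.ne_of_adj hx (α.injective h)⟩⟩
  refine Nat.decreasingInduction (n := n) (motive := fun k _ => (α v : ℕ) < k →
      ∀ x y, Heavy G S v (labeledFrom α k) x → Heavy G S v (labeledFrom α k) y →
        G.ReachWithin Sᶜ x y) ?_ ?_ (α v).isLt (Nat.lt_succ_self _) a b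
      (hheavy a ha haS) (hheavy b hb hbS)
  · intro k hk ih hvk x y hx hy
    rw [labeledFrom_eq_insert α ⟨k, hk⟩] at hx hy
    refine reachWithin_compl_of_heavy_insert hS hvS (show ¬ k + 1 ≤ (α v : ℕ) by omega) ?_
      (by simp [labeledFrom]) (fun w hw => hα.ncard_le ⟨k, hk⟩ hw) (ih (by omega)) hx hy
    rintro rfl
    simp at hvk
  · intro _ x _ hx
    rw [labeledFrom_eq_empty] at hx
    exact hx.not_empty.elim

theorem IsMCS.reachWithin_compl_of_mem_closedNbhd {n : ℕ} {α : V ≃ Fin n} (hα : IsMCS G α)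
    {v : V} (hv : ∀ w, α v ≤ α w) {S : Set V} (hS : G.IsClique S) {a b : V}
    (ha : a ∈ insert v (G.neighborSet v) \ S) (hb : b ∈ insert v (G.neighborSet v) \ S) :
    G.ReachWithin Sᶜ a b := by
  by_cases hvS : v ∈ S
  · have hN : ∀ x ∈ insert v (G.neighborSet v) \ S, G.Adj v x := fun x ⟨hx, hxS⟩ =>
      hx.resolve_left fun h => hxS (h ▸ hvS)
    exact hα.reachWithin_compl_of_adj hv hS hvS (hN a ha) (hN b hb) ha.2 hb.2
  · have hR : ∀ x ∈ insert v (G.neighborSet v) \ S, G.ReachWithin Sᶜ x v := by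
      rintro x ⟨rfl | hx, hxS⟩
      · exact .refl hxS
      · exact .of_adj (G.adj_symm hx) hxS hvS
    exact (hR a ha).trans (hR b hb).symm

theorem IsMCS.reachWithin_compl_of_mem_hull {n : ℕ} {α : V ≃ Fin n} (hα : IsMCS G α) {v : V}
    (hv : ∀ w, α v ≤ α w) {H : Set V}
    (hmin : ∀ H', ConvexSet G H' → insert v (G.neighborSet v) ⊆ H' → H ⊆ H') {S : Set V}
    (hS : G.IsClique S) {u w : V} (hu : u ∈ H \ S) (hw : w ∈ H \ S) : G.ReachWithin Sᶜ u w := by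
  have hHK := hmin _ (convexSet_union_reachWithin_compl hS (insert v (G.neighborSet v) \ S))
    fun x hx => by
      by_cases hxS : x ∈ S
      · exact .inl hxS
      · exact .inr ⟨x, ⟨hx, hxS⟩, .refl hxS⟩
  obtain ⟨a, ha, hua⟩ := (hHK hu.1).resolve_left hu.2
  obtain ⟨b, hb, hwb⟩ := (hHK hw.1).resolve_left hw.2
  exact hua.trans ((hα.reachWithin_compl_of_mem_closedNbhd hv hS ha hb).trans hwb.symm)

theorem ConvexSet.not_exists_cliqueMinSep_induce {H : Set V} (hH : ConvexSet G H)
    (hreach : ∀ S, G.IsClique S → ∀ u ∈ H \ S, ∀ w ∈ H \ S, G.ReachWithin Sᶜ u w) :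
    ¬ ∃ S : Set H, CliqueMinSep (G.induce H) S := by
  rintro ⟨T, hT, u, w, hsep, -⟩
  rw [← Set.preimage_image_eq T Subtype.val_injective, sepSet_induce_preimage_iff] at hsep
  obtain ⟨huT, hwT, hsep⟩ := hsep
  exact hsep (hH.reachWithin_inter u.2 w.2
    (hreach _ (isClique_image_of_isClique_induce hT) u ⟨u.2, huT⟩ w ⟨w.2, hwT⟩))

theorem ConvexSet.eq_of_subset_of_not_exists_cliqueMinSep [Finite V] {H : Set V}
    (hH : ConvexSet G H) {y : V} (hy : insert y (G.neighborSet y) ⊆ H) {H' : Set V}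
    (hHH' : H ⊆ H') (hH' : ¬ ∃ S : Set H', CliqueMinSep (G.induce H') S) : H' = H := by
  refine Set.Subset.antisymm (fun z hzH' => ?_) hHH'
  by_contra hzH
  set B := {d ∈ H | ∃ c, G.ReachWithin (H' \ H) z c ∧ G.Adj c d}
  have hB : G.IsClique B := by
    rintro a ⟨ha, c, hzc, hca⟩ b ⟨hb, d, hzd, hdb⟩ hab
    exact hH.adj_of_reachWithin_compl ha hb hab hca.symm hdb.symm
      ((hzc.symm.trans hzd).mono fun _ h => h.2)
  have hyH : y ∈ H := hy (Set.mem_insert y _)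
  have hyB : y ∉ B := fun ⟨_, c, hzc, hcy⟩ =>
    hzc.mem_right.2 (hy (Set.mem_insert_of_mem _ hcy.symm))
  have hsep : SepSet (G.induce H') ⟨z, hzH'⟩ ⟨y, hHH' hyH⟩ (Subtype.val ⁻¹' B) := by
    refine sepSet_induce_preimage_iff.2 ⟨fun h => hzH h.1, hyB, fun ⟨p, hp⟩ => ?_⟩
    obtain ⟨d, hd, hdH, hdB⟩ :=
      p.exists_boundary_reachWithin_diff (fun x hx => (hp x hx).1) hzH hyH
    exact (hp d hd).2 ⟨hdH, hdB⟩
  obtain ⟨T, hTB, hT⟩ := exists_minSepSet_subset hsep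
  exact hH' ⟨T, (isClique_induce_preimage hB).subset hTB, _, _, hT⟩

end

theorem convex_hull_of_min_MCS_vertex_is_atom_general {n : ℕ}
    (G : SimpleGraph V) (hG : G.Connected)
    (α : V ≃ Fin n) (hα : IsMCS G α) (v : V) (hv : ∀ w, α v ≤ α w)
    (H : Set V) (hconv : ConvexSet G H) (hsub : insert v (G.neighborSet v) ⊆ H)
    (hmin : ∀ H', ConvexSet G H' → insert v (G.neighborSet v) ⊆ H' → H ⊆ H') :
    GraphAtom G H := by
  have : Finite V := .of_equiv _ α.symm
  refine ⟨?_, ?_, fun H' hHH' _ hH' =>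
    hconv.eq_of_subset_of_not_exists_cliqueMinSep hsub hHH' hH'⟩
  · refine induce_connected_of_reachWithin ⟨v, hsub (Set.mem_insert v _)⟩ fun x hx y hy => ?_
    obtain ⟨p⟩ := hG.preconnected x y
    exact (hconv.reachWithin_inter (A := Set.univ) hx hy ⟨p, fun _ _ => trivial⟩).mono
      Set.inter_subset_left
  · exact hconv.not_exists_cliqueMinSep_induce fun S hS u hu w hw =>
      hα.reachWithin_compl_of_mem_hull hv hmin hS hu hw

theorem convex_hull_of_min_MCS_vertex_is_atom [Fintype V] {n : ℕ}
    (G : SimpleGraph V) (hG : G.Connected)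
    (α : V ≃ Fin n) (hα : IsMCS G α) (v : V) (hv : ∀ w, α v ≤ α w)
    (H : Set V) (hconv : ConvexSet G H) (hsub : insert v (G.neighborSet v) ⊆ H)
    (hmin : ∀ H', ConvexSet G H' → insert v (G.neighborSet v) ⊆ H' → H ⊆ H') :
    GraphAtom G H :=
  convex_hull_of_min_MCS_vertex_is_atom_general G hG α hα v hv H hconv hsub hmin
end

section
/- If G_H is an atom of a connected graph G with H ≠ V, and M is a connected component of the induced subgraph on V \ H, then N_G(M) is a clique minimal separator of G. -/
open SimpleGraph

variable {V : Type*}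

/-! If `A ⊆ H ∩ N(M)` is nonempty, choose `X ⊆ M` minimal among connected sets adjacent to all
of `A`. Since `H ∪ X` is connected and strictly larger than the atom `H`, it has a clique separator
`R`; as `H` has no clique separator, `H \ R` lies in one component of `G[(H ∪ X) \ R]`, so another
component `F` lies inside `X`. If `R` meets `X`, then `X \ F` is still connected (it is attached to
`F` only through the clique `R`) and adjacent to all of `A`, contradicting minimality; otherwise
`X ⊆ F` forces `A ⊆ R` while `R` misses a vertex of `H`. Taking for `A` a non-edge of `N(M)` shows
that `N(M)` is a clique, and taking `A = H` shows `H ⊄ N(M)`. Finally `H \ N(M)` is connected and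
every vertex of `N(M)` has a neighbour in it, again because `H` has no clique separator; so every
vertex of `N(M)` is needed to separate a vertex of `M` from one of `H \ N(M)`. -/

namespace SimpleGraph

variable {G : SimpleGraph V} {A B : Set V} {u v w : V}

def ReachableWithin (G : SimpleGraph V) (A : Set V) (u v : V) : Prop :=
  ∃ p : G.Walk u v, ∀ x ∈ p.support, x ∈ A

namespace ReachableWithin

lemma refl (hu : u ∈ A) : G.ReachableWithin A u u := ⟨.nil, by simpa⟩

lemma symm (h : G.ReachableWithin A u v) : G.ReachableWithin A v u :=
  let ⟨p, hp⟩ := h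
  ⟨p.reverse, by simpa using hp⟩

lemma trans (h : G.ReachableWithin A u v) (h' : G.ReachableWithin A v w) :
    G.ReachableWithin A u w := by
  obtain ⟨p, hp⟩ := h
  obtain ⟨q, hq⟩ := h'
  refine ⟨p.append q, fun x hx => ?_⟩
  rcases (Walk.mem_support_append_iff p q).mp hx with hx | hx
  exacts [hp x hx, hq x hx]

lemma mono (hAB : A ⊆ B) (h : G.ReachableWithin A u v) : G.ReachableWithin B u v :=
  let ⟨p, hp⟩ := h
  ⟨p, fun x hx => hAB (hp x hx)⟩

lemma mem_left (h : G.ReachableWithin A u v) : u ∈ A :=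
  let ⟨p, hp⟩ := h
  hp u p.start_mem_support

lemma mem_right (h : G.ReachableWithin A u v) : v ∈ A :=
  let ⟨p, hp⟩ := h
  hp v p.end_mem_support

lemma of_adj (h : G.Adj u v) (hu : u ∈ A) (hv : v ∈ A) : G.ReachableWithin A u v :=
  ⟨h.toWalk, by simp [hu, hv]⟩

lemma exists_adj_of_ne (h : G.ReachableWithin A u v) (huv : u ≠ v) : ∃ w ∈ A, G.Adj u w := by
  obtain ⟨p, hp⟩ := h
  cases p with
  | nil => exact absurd rfl huv
  | cons huw q => exact ⟨_, hp _ (by simp), huw⟩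

end ReachableWithin

lemma reachableWithin_univ : G.ReachableWithin Set.univ u v ↔ G.Reachable u v :=
  ⟨fun ⟨p, _⟩ => ⟨p⟩, fun ⟨p⟩ => ⟨p, fun _ _ => trivial⟩⟩

lemma reachableWithin_induce_iff (hB : B ⊆ A) {u v : A} :
    (G.induce A).ReachableWithin (Subtype.val ⁻¹' B) u v ↔ G.ReachableWithin B u.1 v.1 := by
  constructor
  · rintro ⟨q, hq⟩
    refine ⟨q.map (Embedding.induce A).toHom, fun x hx => ?_⟩
    obtain ⟨y, hy, rfl⟩ := List.mem_map.mp (Walk.support_map _ q ▸ hx)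
    exact hq y hy
  · rintro ⟨p, hp⟩
    refine ⟨p.induce A fun x hx => hB (hp x hx), fun x hx => ?_⟩
    rw [Walk.support_induce, List.mem_attachWith] at hx
    exact hp x hx

lemma induce_connected_iff_reachableWithin :
    (G.induce A).Connected ↔ A.Nonempty ∧ ∀ u ∈ A, ∀ v ∈ A, G.ReachableWithin A u v := by
  rw [connected_iff, Set.nonempty_coe_sort, and_comm]
  refine and_congr_right fun _ => ⟨fun h u hu v hv => ?_, fun h u v => ?_⟩
  · rw [← reachableWithin_induce_iff (u := ⟨u, hu⟩) (v := ⟨v, hv⟩) subset_rfl,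
      Subtype.coe_preimage_self, reachableWithin_univ]
    exact h _ _
  · rw [← reachableWithin_univ, ← Subtype.coe_preimage_self, reachableWithin_induce_iff subset_rfl]
    exact h u u.2 v v.2

lemma Connected.reachableWithin (h : (G.induce A).Connected) (hu : u ∈ A) (hv : v ∈ A) :
    G.ReachableWithin A u v :=
  (induce_connected_iff_reachableWithin.mp h).2 u hu v hv

lemma ReachableWithin.diff_of_isClique {F R : Set V} (hR : G.IsClique R)
    (hbd : ∀ w ∈ A \ F, ∀ f ∈ F, G.Adj w f → w ∈ R)
    (h : G.ReachableWithin A u v) (hu : u ∉ F) (hv : v ∉ F) :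
    G.ReachableWithin (A \ F) u v := by
  suffices key : ∀ {u} (p : G.Walk u v), (∀ x ∈ p.support, x ∈ A) →
      (u ∉ F → G.ReachableWithin (A \ F) u v) ∧
        (u ∈ F → ∃ r ∈ R, G.ReachableWithin (A \ F) r v) from
    let ⟨p, hp⟩ := h
    (key p hp).1 hu
  clear h hu
  intro u p hp
  induction p with
  | nil => exact ⟨fun hu => .refl ⟨hp _ (by simp), hu⟩, fun hu => absurd hu hv⟩
  | @cons u w _ huw q ih =>
    have hu : u ∈ A := hp u (by simp)
    have hw : w ∈ A := hp w (by simp)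
    obtain ⟨ihw, ihF⟩ := ih hv fun x hx => hp x (by simp [hx])
    refine ⟨fun huF => ?_, fun huF => ?_⟩
    · by_cases hwF : w ∈ F
      · obtain ⟨r, hr, hrv⟩ := ihF hwF
        rcases eq_or_ne u r with rfl | hur
        · exact hrv
        · have hur' : G.Adj u r := hR (hbd u ⟨hu, huF⟩ w hwF huw) hr hur
          exact (ReachableWithin.of_adj (A := A \ F) hur' ⟨hu, huF⟩ hrv.mem_left).trans hrv
      · exact (ReachableWithin.of_adj (A := A \ F) huw ⟨hu, huF⟩ ⟨hw, hwF⟩).trans (ihw hwF)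
    · by_cases hwF : w ∈ F
      · exact ihF hwF
      · exact ⟨w, hbd w ⟨hw, hwF⟩ u huF huw.symm, ihw hwF⟩

end SimpleGraph

open SimpleGraph

section

variable {G : SimpleGraph V} {A B M R S : Set V} {u v : V}

lemma sepSet_iff : SepSet G u v S ↔ u ∉ S ∧ v ∉ S ∧ ¬ G.ReachableWithin Sᶜ u v := by
  simp [SepSet, ReachableWithin]

lemma exists_cliqueMinSep_of_cliqueSep [Finite V] (h : CliqueSep G S) :
    ∃ T ⊆ S, CliqueMinSep G T := by
  obtain ⟨hS, u, v, huv⟩ := h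
  obtain ⟨T, hTS, hT⟩ := exists_minimal_le_of_wellFoundedLT (SepSet G u v) S huv
  exact ⟨T, hTS, hS.subset hTS, u, v, hT.1, fun T' hT' hsep => hT'.2 (hT.2 hsep hT'.1)⟩

lemma minSepSet_of_forall_reachableWithin (h : SepSet G u v S)
    (hmin : ∀ s ∈ S, G.ReachableWithin (insert s Sᶜ) u v) : MinSepSet G u v S := by
  refine ⟨h, fun S' hS' hsep => ?_⟩
  obtain ⟨s, hsS, hsS'⟩ := Set.exists_of_ssubset hS'
  obtain ⟨p, hp⟩ := hmin s hsS
  obtain ⟨x, hx, hxS'⟩ := hsep.2.2 p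
  rcases hp x hx with rfl | hxS
  exacts [hsS' hxS', hxS (hS'.subset hxS')]

lemma SimpleGraph.Walk.mem_of_forall_notMem_nbhd (p : G.Walk u v)
    (hp : ∀ x ∈ p.support, x ∉ Nbhd G M) (hu : u ∈ M) : v ∈ M := by
  induction p with
  | nil => exact hu
  | @cons u w _ huw q ih =>
    refine ih (fun x hx => hp x (by simp [hx])) ?_
    by_contra hw
    exact hp w (by simp) ⟨hw, u, hu, huw.symm⟩

lemma sepSet_nbhd (hu : u ∈ M) (hvM : v ∉ M) (hvN : v ∉ Nbhd G M) : SepSet G u v (Nbhd G M) :=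
  ⟨fun h => h.1 hu, hvN, fun p => by
    by_contra! h
    exact hvM (p.mem_of_forall_notMem_nbhd h hu)⟩

lemma CompOf.nbhd_subset_compl (hM : CompOf G A M) : Nbhd G M ⊆ Aᶜ := by
  rintro v ⟨hvM, x, hxM, hvx⟩ hvA
  have hconn : (G.induce ({v, x} ∪ M)).Connected :=
    induce_union_connected (induce_pair_connected_of_adj hvx).preconnected
      hM.2.2.1.preconnected ⟨x, by simp, hxM⟩
  have hsub : {v, x} ∪ M ⊆ A := by
    simp only [Set.union_subset_iff, Set.insert_subset_iff, Set.singleton_subset_iff]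
    exact ⟨⟨hvA, hM.2.1 hxM⟩, hM.2.1⟩
  exact hvM (hM.2.2.2 _ Set.subset_union_right hsub hconn ▸ by simp)

lemma reachableWithin_diff_of_isClique [Finite V] {H : Set V}
    (hH : ¬ ∃ S : Set H, CliqueMinSep (G.induce H) S) (hR : G.IsClique R)
    (hu : u ∈ H \ R) (hv : v ∈ H \ R) : G.ReachableWithin (H \ R) u v := by
  by_contra huv
  have hsep : CliqueSep (G.induce H) (Subtype.val ⁻¹' R) := by
    refine ⟨fun x hx y hy hxy => hR hx hy (Subtype.val_injective.ne hxy), ⟨u, hu.1⟩, ⟨v, hv.1⟩,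
      sepSet_iff.mpr ⟨hu.2, hv.2, fun h => huv ?_⟩⟩
    rw [← reachableWithin_induce_iff (u := ⟨u, hu.1⟩) (v := ⟨v, hv.1⟩) Set.sdiff_subset]
    convert h using 2
    ext
    simp
  obtain ⟨T, -, hT⟩ := exists_cliqueMinSep_of_cliqueSep hsep
  exact hH ⟨T, hT⟩

lemma exists_adj_mem_diff_of_isClique [Finite V] {H : Set V} {s : V}
    (hH : ¬ ∃ S : Set H, CliqueMinSep (G.induce H) S) (hS : G.IsClique S) (hsH : s ∈ H)
    (hsS : s ∈ S) (hv : v ∈ H \ S) : ∃ w ∈ H \ S, G.Adj s w := by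
  by_contra! hN
  have hNS : {w | w ∈ H ∧ G.Adj s w} ⊆ S := fun w hw => by
    by_contra hwS
    exact hN w ⟨hw.1, hwS⟩ hw.2
  obtain ⟨w, hw, hsw⟩ := (reachableWithin_diff_of_isClique hH (hS.subset hNS)
    ⟨hsH, fun h => G.irrefl h.2⟩ ⟨hv.1, fun h => hv.2 (hNS h)⟩).exists_adj_of_ne
    fun h => hv.2 (h ▸ hsS)
  exact hw.2 ⟨hw.1, hsw⟩

lemma exists_isClique_not_reachableWithin {Q : Set A} (h : CliqueSep (G.induce A) Q) :
    ∃ R, G.IsClique R ∧ ∃ a ∈ A \ R, ∃ b ∈ A \ R, ¬ G.ReachableWithin (A \ R) a b := by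
  obtain ⟨hQ, u, v, huv⟩ := h
  obtain ⟨huQ, hvQ, hreach⟩ := sepSet_iff.mp huv
  refine ⟨Subtype.val '' Q, ?_, u, ⟨u.2, by simpa⟩, v, ⟨v.2, by simpa⟩, fun h => hreach ?_⟩
  · rintro _ ⟨x, hx, rfl⟩ _ ⟨y, hy, rfl⟩ hxy
    exact hQ hx hy (ne_of_apply_ne _ hxy)
  · rw [← reachableWithin_induce_iff Set.sdiff_subset] at h
    convert h using 2
    ext
    simp

lemma induce_diff_connected_of_isClique {X F : Set V} (hX : (G.induce X).Connected)
    (hR : G.IsClique R) (hbd : ∀ w ∈ X \ F, ∀ f ∈ F, G.Adj w f → w ∈ R)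
    (hne : (X \ F).Nonempty) : (G.induce (X \ F)).Connected :=
  induce_connected_iff_reachableWithin.mpr ⟨hne, fun _ hu _ hv =>
    (hX.reachableWithin hu.1 hv.1).diff_of_isClique hR hbd hu.2 hv.2⟩

lemma exists_not_reachableWithin_avoiding {H : Set V} {a b : V} (ha : a ∈ B) (hb : b ∈ B)
    (hab : ¬ G.ReachableWithin B a b)
    (hH : ∀ h₁ ∈ H ∩ B, ∀ h₂ ∈ H ∩ B, G.ReachableWithin B h₁ h₂) :
    ∃ c ∈ B, ∃ d ∈ B, ¬ G.ReachableWithin B c d ∧ ∀ z ∈ H, ¬ G.ReachableWithin B c z := by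
  by_cases haH : ∀ z ∈ H, ¬ G.ReachableWithin B a z
  · exact ⟨a, ha, b, hb, hab, haH⟩
  · simp only [not_forall, not_not] at haH
    obtain ⟨h₁, hh₁, hah₁⟩ := haH
    refine ⟨b, hb, a, ha, fun h => hab h.symm, fun h₂ hh₂ hbh₂ => hab ?_⟩
    exact hah₁.trans ((hH h₁ ⟨hh₁, hah₁.mem_right⟩ h₂ ⟨hh₂, hbh₂.mem_right⟩).trans hbh₂.symm)

lemma GraphAtom.exists_isClique_not_reachableWithin_avoiding [Finite V] {H H' : Set V}
    (hH : GraphAtom G H) (hHH' : H ⊆ H') (hH' : (G.induce H').Connected) (hne : H' ≠ H) :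
    ∃ R, G.IsClique R ∧ ∃ c ∈ H' \ R, ∃ d ∈ H' \ R,
      ¬ G.ReachableWithin (H' \ R) c d ∧ ∀ z ∈ H, ¬ G.ReachableWithin (H' \ R) c z := by
  have hsep : ∃ S : Set H', CliqueMinSep (G.induce H') S := by
    by_contra h
    exact hne (hH.2.2 H' hHH' hH' h)
  obtain ⟨S, hS, u, v, huv, -⟩ := hsep
  obtain ⟨R, hR, a, ha, b, hb, hab⟩ := exists_isClique_not_reachableWithin ⟨hS, u, v, huv⟩
  exact ⟨R, hR, exists_not_reachableWithin_avoiding ha hb hab fun h₁ hh₁ h₂ hh₂ =>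
    (reachableWithin_diff_of_isClique hH.2.1 hR ⟨hh₁.1, hh₁.2.2⟩ ⟨hh₂.1, hh₂.2.2⟩).mono
      (Set.sdiff_subset_sdiff_left hHH')⟩

lemma GraphAtom.exists_isClique_superset_not_superset [Finite V] {H : Set V}
    (hH : GraphAtom G H) (hM : CompOf G Hᶜ M) (hA : A.Nonempty) (hAH : A ⊆ H)
    (hAM : A ⊆ Nbhd G M) : ∃ R, G.IsClique R ∧ A ⊆ R ∧ ¬ H ⊆ R := by
  obtain ⟨X, hXM, ⟨hX, hAX⟩, hXmin⟩ := exists_minimal_le_of_wellFoundedLT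
    (fun X => (G.induce X).Connected ∧ A ⊆ Nbhd G X) M ⟨hM.2.2.1, hAM⟩
  have hXH : Disjoint X H := Set.subset_compl_iff_disjoint_right.mp (hXM.trans hM.2.1)
  obtain ⟨α, hα⟩ := hA
  obtain ⟨-, x, hx, hαx⟩ := hAX hα
  obtain ⟨R, hR, c, hc, d, hd, hcd, hcH⟩ := hH.exists_isClique_not_reachableWithin_avoiding
    Set.subset_union_left
    (connected_induce_union hH.1.preconnected hX.preconnected (hAH hα) hx hαx)
    fun h => hXH.notMem_of_mem_left hx (h ▸ Or.inr hx)
  set B := (H ∪ X) \ R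
  set F := {z | G.ReachableWithin B c z}
  have hFX : F ⊆ X := fun z hz => hz.mem_right.1.resolve_left fun hzH => hcH z hzH hz
  have hbd : ∀ w ∈ H ∪ X, w ∉ F → ∀ f ∈ F, G.Adj w f → w ∈ R := fun w hw hwF f hf hwf => by
    by_contra hwR
    exact hwF (hf.trans (.of_adj hwf.symm hf.mem_right ⟨hw, hwR⟩))
  have hcX : c ∈ X := hFX (.refl hc)
  by_cases hRX : (R ∩ X).Nonempty
  · obtain ⟨ρ, hρR, hρX⟩ := hRX
    have hρF : ρ ∉ F := fun h => h.mem_right.2 hρR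
    have hXF : (G.induce (X \ F)).Connected ∧ A ⊆ Nbhd G (X \ F) := by
      refine ⟨induce_diff_connected_of_isClique hX hR
        (fun w hw f hf hwf => hbd w (Or.inr hw.1) hw.2 f hf hwf) ⟨ρ, hρX, hρF⟩,
        fun β hβ => ⟨fun h => (hAX hβ).1 h.1, ?_⟩⟩
      obtain ⟨-, y, hy, hβy⟩ := hAX hβ
      by_cases hyF : y ∈ F
      · have hβR : β ∈ R := hbd β (Or.inl (hAH hβ)) (fun h => hcH β (hAH hβ) h) y hyF hβy
        exact ⟨ρ, ⟨hρX, hρF⟩, hR hβR hρR fun h => hXH.notMem_of_mem_left hρX (h ▸ hAH hβ)⟩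
      · exact ⟨y, ⟨hy, hyF⟩, hβy⟩
    exact ((hXmin hXF Set.sdiff_subset hcX).2 (.refl hc)).elim
  · have hXB : X ⊆ B := fun z hz => ⟨Or.inr hz, fun hzR => hRX ⟨z, hzR, hz⟩⟩
    have hXF : X ⊆ F := fun z hz => (hX.reachableWithin hcX hz).mono hXB
    refine ⟨R, hR, fun β hβ => ?_, fun hHR => ?_⟩
    · obtain ⟨-, y, hy, hβy⟩ := hAX hβ
      exact hbd β (Or.inl (hAH hβ)) (fun h => hcH β (hAH hβ) h) y (hXF hy) hβy
    · exact hd.2 (hHR (hd.1.resolve_right fun hdX => hcd (hXF hdX)))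

end

theorem atom_complement_component_nbhd_is_clique_min_sep_general [Fintype V]
    (G : SimpleGraph V) (H M : Set V)
    (hH : GraphAtom G H) (hM : CompOf G Hᶜ M) :
    CliqueMinSep G (Nbhd G M) := by
  set S := Nbhd G M
  have hSH : S ⊆ H := by simpa using hM.nbhd_subset_compl
  have hS : G.IsClique S := fun x hx y hy hxy => by
    obtain ⟨R, hR, hxyR, -⟩ := hH.exists_isClique_superset_not_superset hM
      (Set.insert_nonempty x {y}) (Set.pair_subset (hSH hx) (hSH hy)) (Set.pair_subset hx hy)
    exact hR (hxyR (by simp)) (hxyR (by simp)) hxy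
  obtain ⟨v, hv⟩ : (H \ S).Nonempty := by
    by_contra! h
    obtain ⟨R, -, hHR, hHR'⟩ := hH.exists_isClique_superset_not_superset hM
      (Set.nonempty_coe_sort.mp hH.1.nonempty) subset_rfl (Set.sdiff_eq_empty.mp h)
    exact hHR' hHR
  obtain ⟨u, hu⟩ := hM.1
  refine ⟨hS, u, v, minSepSet_of_forall_reachableWithin
    (sepSet_nbhd hu (fun h => hM.2.1 h hv.1) hv.2) fun s hs => ?_⟩
  obtain ⟨-, m, hm, hsm⟩ := id hs
  obtain ⟨w, hw, hsw⟩ := exists_adj_mem_diff_of_isClique hH.2.1 hS (hSH hs) hs hv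
  have hMs : M ⊆ insert s Sᶜ := fun z hz => Or.inr fun hzS => hzS.1 hz
  have hHs : H \ S ⊆ insert s Sᶜ := fun z hz => Or.inr hz.2
  exact ((hM.2.2.1.reachableWithin hu hm).mono hMs).trans <|
    (ReachableWithin.of_adj hsm.symm (hMs hm) (.inl rfl)).trans <|
    (ReachableWithin.of_adj hsw (.inl rfl) (hHs hw)).trans <|
    (reachableWithin_diff_of_isClique hH.2.1 hS hw hv).mono hHs

theorem atom_complement_component_nbhd_is_clique_min_sep [Fintype V]
    (G : SimpleGraph V) (hG : G.Connected) (H M : Set V)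
    (hH : GraphAtom G H) (hne : H ≠ Set.univ) (hM : CompOf G Hᶜ M) :
    CliqueMinSep G (Nbhd G M) :=
  atom_complement_component_nbhd_is_clique_min_sep_general G H M hH hM
end

section
/- If G_H is an atom of a connected graph G, M is a connected component of G − H, and S = N_G(M), then S is complete in G: every two distinct vertices of S are adjacent. -/
open SimpleGraph

variable {V : Type*}

/-!
A neighbour of `M` outside `H` would enlarge the component `M`, so `N(M) ⊆ H`. If `a, b ∈ N(M)`
were non-adjacent, a shortest `a`–`b` walk `p` through `M` would leave `H`, and `H ∪ p` would
contradict the maximality of the atom: a clique minimal separator `K` of `H ∪ p` must cut some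
vertex of `p` off from `H \ K` (which stays joined, `H` being an atom), so `K` meets `p` on both
sides of that vertex, and the edge between these two vertices of `K` shortcuts `p`.
-/

section

variable {G : SimpleGraph V}

def JoinedWithin (G : SimpleGraph V) (s : Set V) (x y : V) : Prop :=
  ∃ p : G.Walk x y, ∀ z ∈ p.support, z ∈ s

namespace JoinedWithin

variable {s t : Set V} {x y z : V}

lemma refl (hx : x ∈ s) : JoinedWithin G s x x :=
  ⟨.nil, by simpa using hx⟩

lemma symm (h : JoinedWithin G s x y) : JoinedWithin G s y x := by
  obtain ⟨p, hp⟩ := h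
  exact ⟨p.reverse, fun z hz => hp z (by simpa using hz)⟩

lemma trans (h : JoinedWithin G s x y) (h' : JoinedWithin G s y z) : JoinedWithin G s x z := by
  obtain ⟨p, hp⟩ := h
  obtain ⟨q, hq⟩ := h'
  refine ⟨p.append q, fun w hw => ?_⟩
  rcases (Walk.mem_support_append_iff p q).mp hw with hw | hw
  exacts [hp w hw, hq w hw]

lemma mono (hst : s ⊆ t) (h : JoinedWithin G s x y) : JoinedWithin G t x y := by
  obtain ⟨p, hp⟩ := h
  exact ⟨p, fun z hz => hst (hp z hz)⟩

lemma mem_right (h : JoinedWithin G s x y) : y ∈ s := by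
  obtain ⟨p, hp⟩ := h
  exact hp y p.end_mem_support

lemma exists_shortest (h : JoinedWithin G s x y) :
    ∃ p : G.Walk x y, (∀ z ∈ p.support, z ∈ s) ∧
      ∀ q : G.Walk x y, (∀ z ∈ q.support, z ∈ s) → p.length ≤ q.length := by
  obtain ⟨p, hp, hmin⟩ :=
    (measure (fun q : G.Walk x y => q.length)).wf.has_min {q | ∀ z ∈ q.support, z ∈ s} h
  exact ⟨p, hp, fun q hq => not_lt.mp (hmin q hq)⟩

end JoinedWithin

lemma SimpleGraph.Preconnected.joinedWithin {s : Set V} (h : (G.induce s).Preconnected)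
    {x y : V} (hx : x ∈ s) (hy : y ∈ s) : JoinedWithin G s x y := by
  obtain ⟨q⟩ := h ⟨x, hx⟩ ⟨y, hy⟩
  have hq : ∀ z ∈ (q.map (Embedding.induce s).toHom).support, z ∈ s := by
    simp only [Walk.support_map, List.mem_map]
    rintro _ ⟨z, -, rfl⟩
    exact z.2
  exact ⟨_, hq⟩

lemma SimpleGraph.Connected.induce_insert_of_mem_nbhd {X : Set V} (hX : (G.induce X).Connected)
    {s : V} (hs : s ∈ Nbhd G X) : (G.induce (insert s X)).Connected := by
  obtain ⟨-, x, hx, hsx⟩ := hs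
  rw [Set.insert_eq]
  exact connected_induce_union (by simp [induce_singleton_eq_top]) hX.preconnected
    (Set.mem_singleton s) hx hsx

lemma CompOf.nbhd_subset_compl_s8 {A X : Set V} (hX : CompOf G A X) : Nbhd G X ⊆ Aᶜ := by
  obtain ⟨-, hXA, hXconn, hXmax⟩ := hX
  intro s hs hsA
  have hgrow := hXmax _ (Set.subset_insert s X) (Set.insert_subset hsA hXA)
    (hXconn.induce_insert_of_mem_nbhd hs)
  exact hs.1 (hgrow ▸ Set.mem_insert s X)

lemma SepSet.exists_minSepSet_subset {W : Type*} [Finite W] {G' : SimpleGraph W} {u v : W}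
    {S : Set W} (h : SepSet G' u v S) : ∃ S' ⊆ S, MinSepSet G' u v S' := by
  obtain ⟨S', hS'S, hmin⟩ := exists_minimal_le_of_wellFoundedLT (SepSet G' u v) S h
  exact ⟨S', hS'S, hmin.1, fun S'' hS'' hsep => hS''.not_ge (hmin.2 hsep hS''.le)⟩

lemma SepSet.not_joinedWithin_sdiff {X : Set V} {T : Set X} {u v : X}
    (h : SepSet (G.induce X) u v T) : ¬ JoinedWithin G (X \ Subtype.val '' T) u v := by
  rintro ⟨p, hp⟩
  obtain ⟨z, hz, hzT⟩ := h.2.2 (p.induce X fun z hz => (hp z hz).1)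
  rw [Walk.support_induce, List.mem_attachWith] at hz
  exact (hp z hz).2 ⟨z, hzT, rfl⟩

/-- A pair disconnected by removing `K` is separated by `K`, hence by a clique minimal separator
inside `K`. -/
lemma joinedWithin_sdiff_of_isClique [Finite V] {X : Set V}
    (hX : ¬ ∃ S : Set X, CliqueMinSep (G.induce X) S) {K : Set V} (hK : G.IsClique K)
    {x y : V} (hx : x ∈ X \ K) (hy : y ∈ X \ K) : JoinedWithin G (X \ K) x y := by
  by_contra hxy
  have hsep : SepSet (G.induce X) ⟨x, hx.1⟩ ⟨y, hy.1⟩ (Subtype.val ⁻¹' K) := by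
    refine ⟨hx.2, hy.2, fun q => ?_⟩
    by_contra! hq
    have hqK : ∀ z ∈ (q.map (Embedding.induce X).toHom).support, z ∈ X \ K := by
      simp only [Walk.support_map, List.mem_map]
      rintro _ ⟨z, hzq, rfl⟩
      exact ⟨z.2, hq z hzq⟩
    exact hxy ⟨_, hqK⟩
  obtain ⟨S, hSK, hSmin⟩ := hsep.exists_minSepSet_subset
  exact hX ⟨S, fun z hz z' hz' hne => hK (hSK hz) (hSK hz') (Subtype.val_injective.ne hne),
    _, _, hSmin⟩

lemma exists_not_joinedWithin_of_subset {P Q : Set V} (hPQ : P ⊆ Q)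
    (hP : ∀ x ∈ P, ∀ y ∈ P, JoinedWithin G P x y) {u v : V} (hu : u ∈ Q) (hv : v ∈ Q)
    (huv : ¬ JoinedWithin G Q u v) : ∃ w ∈ Q, w ∉ P ∧ ∀ x ∈ P, ¬ JoinedWithin G Q w x := by
  by_contra! h
  have reach : ∀ w ∈ Q, ∃ x ∈ P, JoinedWithin G Q w x := fun w hw => by
    by_cases hwP : w ∈ P
    · exact ⟨w, hwP, .refl hw⟩
    · exact h w hw hwP
  obtain ⟨x, hx, hux⟩ := reach u hu
  obtain ⟨y, hy, hvy⟩ := reach v hv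
  exact huv ((hux.trans ((hP x hx y hy).mono hPQ)).trans hvy.symm)

namespace SimpleGraph.Walk

lemma exists_shorter_of_mem_takeUntil_dropUntil [DecidableEq V] {a b w s t : V} (p : G.Walk a b)
    (hw : w ∈ p.support) (hs : s ∈ (p.takeUntil w hw).support)
    (ht : t ∈ (p.dropUntil w hw).support) (hsw : s ≠ w) (htw : t ≠ w)
    (hst : s = t ∨ G.Adj s t) :
    ∃ q : G.Walk a b, (∀ z ∈ q.support, z ∈ p.support) ∧ q.length < p.length := by
  obtain ⟨e, he_len, he_supp⟩ : ∃ e : G.Walk s t, e.length ≤ 1 ∧ ∀ z ∈ e.support, z = s ∨ z = t := by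
    rcases hst with rfl | hadj
    · exact ⟨.nil, by simp, by simp⟩
    · exact ⟨hadj.toWalk, by simp, by simp⟩
  have hs_p : s ∈ p.support := p.support_takeUntil_subset_support hw hs
  have ht_p : t ∈ p.support := p.support_dropUntil_subset_support hw ht
  refine ⟨((p.takeUntil w hw).takeUntil s hs).append (e.append ((p.dropUntil w hw).dropUntil t ht)),
    fun z hz => ?_, ?_⟩
  · simp only [mem_support_append_iff] at hz
    rcases hz with hz | hz | hz
    · exact p.support_takeUntil_subset_support hw (support_takeUntil_subset_support _ hs hz)
    · rcases he_supp z hz with rfl | rfl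
      exacts [hs_p, ht_p]
    · exact p.support_dropUntil_subset_support hw (support_dropUntil_subset_support _ ht hz)
  · have h₁ := length_takeUntil_lt_length hs hsw
    have h₂ := length_dropUntil_lt_length ht htw
    have hp := congrArg length (p.take_spec hw)
    simp only [length_append] at hp ⊢
    omega

lemma joinedWithin_start_or_end_of_isClique {a b w : V} (p : G.Walk a b)
    (hmin : ∀ q : G.Walk a b, (∀ z ∈ q.support, z ∈ p.support) → p.length ≤ q.length)
    {K : Set V} (hK : G.IsClique K) (hw : w ∈ p.support) (hwK : w ∉ K) :
    JoinedWithin G ({z | z ∈ p.support} \ K) w a ∨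
      JoinedWithin G ({z | z ∈ p.support} \ K) w b := by
  classical
  by_contra! h
  obtain ⟨s, hs, hsK⟩ : ∃ s ∈ (p.takeUntil w hw).support, s ∈ K := by
    by_contra! hs
    refine h.1 ⟨(p.takeUntil w hw).reverse, fun z hz => ?_⟩
    rw [support_reverse, List.mem_reverse] at hz
    exact ⟨p.support_takeUntil_subset_support hw hz, hs z hz⟩
  obtain ⟨t, ht, htK⟩ : ∃ t ∈ (p.dropUntil w hw).support, t ∈ K := by
    by_contra! ht
    exact h.2 ⟨p.dropUntil w hw, fun z hz => ⟨p.support_dropUntil_subset_support hw hz, ht z hz⟩⟩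
  obtain ⟨q, hq, hlt⟩ := p.exists_shorter_of_mem_takeUntil_dropUntil hw hs ht
    (ne_of_mem_of_not_mem hsK hwK) (ne_of_mem_of_not_mem htK hwK)
    (or_iff_not_imp_left.mpr (hK hsK htK))
  exact (hmin q hq).not_gt hlt

end SimpleGraph.Walk

theorem not_exists_cliqueMinSep_union_support [Finite V] {H : Set V}
    (hH : ¬ ∃ S : Set H, CliqueMinSep (G.induce H) S) {a b : V} (ha : a ∈ H) (hb : b ∈ H)
    (p : G.Walk a b)
    (hmin : ∀ q : G.Walk a b, (∀ z ∈ q.support, z ∈ p.support) → p.length ≤ q.length) :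
    ¬ ∃ S : Set ↥(H ∪ {z | z ∈ p.support}),
      CliqueMinSep (G.induce (H ∪ {z | z ∈ p.support})) S := by
  rintro ⟨T, hT, u, v, hsep, -⟩
  set K : Set V := Subtype.val '' T
  have hK : G.IsClique K := by
    rintro _ ⟨x, hx, rfl⟩ _ ⟨y, hy, rfl⟩ hne
    exact hT hx hy (ne_of_apply_ne _ hne)
  have hnotK : ∀ {x}, x ∉ T → (x : V) ∉ K := fun hx hxK =>
    hx (Subtype.val_injective.mem_set_image.mp hxK)
  obtain ⟨w, ⟨hwH', hwK⟩, hwHK, hw⟩ := exists_not_joinedWithin_of_subset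
    (Set.sdiff_subset_sdiff_left Set.subset_union_left)
    (fun x hx y hy => joinedWithin_sdiff_of_isClique hH hK hx hy)
    ⟨u.2, hnotK hsep.1⟩ ⟨v.2, hnotK hsep.2.1⟩ hsep.not_joinedWithin_sdiff
  have hwp : w ∈ p.support := hwH'.resolve_left fun hwH => hwHK ⟨hwH, hwK⟩
  have hsub : {z | z ∈ p.support} \ K ⊆ (H ∪ {z | z ∈ p.support}) \ K :=
    Set.sdiff_subset_sdiff_left Set.subset_union_right
  rcases p.joinedWithin_start_or_end_of_isClique hmin hK hwp hwK with hwa | hwb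
  · exact hw a ⟨ha, hwa.mem_right.2⟩ (hwa.mono hsub)
  · exact hw b ⟨hb, hwb.mem_right.2⟩ (hwb.mono hsub)

end

theorem atom_complement_component_nbhd_is_complete_general [Fintype V]
    (G : SimpleGraph V) (H M S : Set V)
    (hH : GraphAtom G H) (hM : CompOf G Hᶜ M) (hSdef : S = Nbhd G M) :
    G.IsClique S := by
  obtain ⟨hHconn, hHfree, hHmax⟩ := hH
  subst hSdef
  intro a ha b hb hab
  by_contra hnadj
  have haH : a ∈ H := by simpa using hM.nbhd_subset_compl_s8 ha
  have hbH : b ∈ H := by simpa using hM.nbhd_subset_compl_s8 hb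
  obtain ⟨-, hMH, hMconn, -⟩ := hM
  have ha' : a ∈ Nbhd G (insert b M) :=
    ⟨by simp [hab, ha.1], ha.2.imp fun _ h => ⟨Set.mem_insert_of_mem b h.1, h.2⟩⟩
  have hconn : (G.induce (insert a (insert b M))).Connected :=
    (hMconn.induce_insert_of_mem_nbhd hb).induce_insert_of_mem_nbhd ha'
  obtain ⟨p, hpA, hpmin⟩ := (hconn.preconnected.joinedWithin (x := a) (y := b) (by simp)
    (by simp)).exists_shortest
  have hH' : H ∪ {z | z ∈ p.support} = H :=
    hHmax _ Set.subset_union_left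
      (induce_union_connected hHconn.preconnected p.connected_induce_support.preconnected
        ⟨a, haH, p.start_mem_support⟩)
      (not_exists_cliqueMinSep_union_support hHfree haH hbH p
        fun q hq => hpmin q fun z hz => hpA z (hq z hz))
  have hadj : G.Adj a p.snd := p.adj_snd (Walk.not_nil_of_ne hab)
  have hsnd_p : p.snd ∈ p.support := p.getVert_mem_support 1
  have hsnd : p.snd ∈ M := by
    rcases hpA _ hsnd_p with h | h | h
    · rw [h] at hadj
      exact absurd hadj G.irrefl
    · rw [h] at hadj
      exact absurd hadj hnadj
    · exact h
  exact hMH hsnd (hH' ▸ Or.inr hsnd_p)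

theorem atom_complement_component_nbhd_is_complete [Fintype V]
    (G : SimpleGraph V) (hG : G.Connected) (H M S : Set V)
    (hH : GraphAtom G H) (hM : CompOf G Hᶜ M) (hSdef : S = Nbhd G M) :
    G.IsClique S :=
  atom_complement_component_nbhd_is_complete_general G H M S hH hM hSdef
end

section
/- Every vertex of a connected graph G belongs to at least one atom of G, and hence the atoms of G cover V. -/
open SimpleGraph

variable {V : Type*}

/-! A single vertex induces a connected graph without clique minimal separators, since a separator
needs two distinct vertices to separate. In a finite graph such a vertex set extends to a maximal
one, and the maximal ones are exactly the atoms. -/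

lemma SepSet.ne {G : SimpleGraph V} {u v : V} {S : Set V} (h : SepSet G u v S) : u ≠ v := by
  rintro rfl
  obtain ⟨x, hx, hxS⟩ := h.2.2 Walk.nil
  rw [Walk.support_nil, List.mem_singleton] at hx
  exact h.1 (hx ▸ hxS)

lemma not_cliqueMinSep_of_subsingleton [Subsingleton V] (G : SimpleGraph V) (S : Set V) :
    ¬ CliqueMinSep G S :=
  fun ⟨_, u, v, hsep, _⟩ => hsep.ne (Subsingleton.elim u v)

def ConnectedWithoutCliqueMinSep (G : SimpleGraph V) (H : Set V) : Prop :=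
  (G.induce H).Connected ∧ ¬ ∃ S : Set H, CliqueMinSep (G.induce H) S

lemma graphAtom_iff_maximal {G : SimpleGraph V} {H : Set V} :
    GraphAtom G H ↔ Maximal (ConnectedWithoutCliqueMinSep G) H :=
  ⟨fun ⟨hconn, hsep, hmax⟩ => ⟨⟨hconn, hsep⟩, fun _ hH' hsub => (hmax _ hsub hH'.1 hH'.2).le⟩,
    fun ⟨⟨hconn, hsep⟩, hmax⟩ => ⟨hconn, hsep, fun _ hsub hconn' hsep' =>
      (hmax ⟨hconn', hsep'⟩ hsub).antisymm hsub⟩⟩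

lemma connectedWithoutCliqueMinSep_singleton (G : SimpleGraph V) (v : V) :
    ConnectedWithoutCliqueMinSep G {v} :=
  ⟨⟨Preconnected.of_subsingleton⟩, fun ⟨S, hS⟩ => not_cliqueMinSep_of_subsingleton _ S hS⟩

lemma exists_graphAtom_mem [Finite V] (G : SimpleGraph V) (v : V) :
    ∃ H : Set V, GraphAtom G H ∧ v ∈ H :=
  let ⟨H, hvH, hH⟩ := Finite.exists_le_maximal (connectedWithoutCliqueMinSep_singleton G v)
  ⟨H, graphAtom_iff_maximal.2 hH, hvH rfl⟩

theorem atoms_cover_general [Fintype V] (G : SimpleGraph V) :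
    (∀ v : V, ∃ H : Set V, GraphAtom G H ∧ v ∈ H) ∧
    ⋃₀ {H : Set V | GraphAtom G H} = Set.univ :=
  ⟨exists_graphAtom_mem G, Set.sUnion_eq_univ_iff.2 (exists_graphAtom_mem G)⟩

theorem atoms_cover [Fintype V] (G : SimpleGraph V) (hG : G.Connected) :
    (∀ v : V, ∃ H : Set V, GraphAtom G H ∧ v ∈ H) ∧
    ⋃₀ {H : Set V | GraphAtom G H} = Set.univ :=
  atoms_cover_general G
end
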